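/- Let A ∈ ℝ^{m×n}, let R ∈ ℝ^{m×m} and Q ∈ ℝ^{n×n} be symmetric positive definite, let λ > 0, let b ∈ ℝ^m, and let V_n ∈ ℝ^{n×n} be invertible. Then the matrices V_nᵀQᵀAᵀR⁻¹AQV_n + λ²V_nᵀQV_n and AᵀR⁻¹AQ + λ²I_n are invertible, and Q V_n (V_nᵀQᵀAᵀR⁻¹AQV_n + λ²V_nᵀQV_n)⁻¹ V_nᵀQᵀAᵀR⁻¹ b = Q (AᵀR⁻¹AQ + λ²I_n)⁻¹ AᵀR⁻¹ b. -/

import Mathlib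

/-! Put `M = AᵀR⁻¹AQ + λ²I`. It factors as `(AᵀR⁻¹A + λ²Q⁻¹) Q` with a positive definite first
factor, so it is invertible, and since `Qᵀ = Q` the projected matrix is `(VₙᵀQ) M Vₙ`. The outer
factors `VₙᵀQ` and `Vₙ` are invertible, so `Vₙ ((VₙᵀQ) M Vₙ)⁻¹ (VₙᵀQ) = M⁻¹`. -/

open Matrix

open scoped ComplexOrder

namespace Matrix

variable {ι 𝕜 : Type*} [Fintype ι] [DecidableEq ι] [RCLike 𝕜]

theorem PosSemidef.isUnit_mul_add_smul_one {P Q : Matrix ι ι 𝕜} (hP : P.PosSemidef)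
    (hQ : Q.PosDef) {c : ℝ} (hc : 0 < c) : IsUnit (P * Q + c • 1) := by
  have hQu : IsUnit Q := hQ.isUnit
  have hfactor : P * Q + c • 1 = (P + c • Q⁻¹) * Q := by
    rw [Matrix.add_mul, Matrix.smul_mul, nonsing_inv_mul _ ((isUnit_iff_isUnit_det Q).mp hQu)]
  rw [hfactor]
  exact (PosDef.posSemidef_add hP (hQ.inv.smul hc)).isUnit.mul hQu

theorem mul_inv_mul_mul_mul_cancel {α : Type*} [CommRing α] {U V : Matrix ι ι α}
    (hU : IsUnit U) (hV : IsUnit V) (M : Matrix ι ι α) : V * (U * M * V)⁻¹ * U = M⁻¹ := by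
  rw [mul_inv_rev, mul_inv_rev, ← Matrix.mul_assoc, ← Matrix.mul_assoc,
    mul_nonsing_inv _ ((isUnit_iff_isUnit_det V).mp hV), Matrix.one_mul, Matrix.mul_assoc,
    nonsing_inv_mul _ ((isUnit_iff_isUnit_det U).mp hU), Matrix.mul_one]

end Matrix

theorem stmt_11 {m n : ℕ} (A : Matrix (Fin m) (Fin n) ℝ)
    (R : Matrix (Fin m) (Fin m) ℝ) (Q : Matrix (Fin n) (Fin n) ℝ)
    (hR : R.PosDef) (hQ : Q.PosDef) (lam : ℝ) (hlam : 0 < lam)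
    (b : Fin m → ℝ) (Vn : Matrix (Fin n) (Fin n) ℝ) (hVn : IsUnit Vn) :
    IsUnit (Vnᵀ * Qᵀ * Aᵀ * R⁻¹ * A * Q * Vn + (lam ^ 2) • (Vnᵀ * Q * Vn)) ∧
    IsUnit (Aᵀ * R⁻¹ * A * Q + (lam ^ 2) • (1 : Matrix (Fin n) (Fin n) ℝ)) ∧
    Q *ᵥ (Vn *ᵥ ((Vnᵀ * Qᵀ * Aᵀ * R⁻¹ * A * Q * Vn + (lam ^ 2) • (Vnᵀ * Q * Vn))⁻¹ *ᵥ
        (Vnᵀ *ᵥ (Qᵀ *ᵥ (Aᵀ *ᵥ (R⁻¹ *ᵥ b)))))) =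
      Q *ᵥ ((Aᵀ * R⁻¹ * A * Q + (lam ^ 2) • (1 : Matrix (Fin n) (Fin n) ℝ))⁻¹ *ᵥ
        (Aᵀ *ᵥ (R⁻¹ *ᵥ b))) := by
  have hQt : Qᵀ = Q := hQ.isHermitian
  set M := Aᵀ * R⁻¹ * A * Q + (lam ^ 2) • (1 : Matrix (Fin n) (Fin n) ℝ)
  have hM : IsUnit M := by
    have hP : (Aᵀ * R⁻¹ * A).PosSemidef := by
      simpa using hR.posSemidef.inv.conjTranspose_mul_mul_same A
    exact hP.isUnit_mul_add_smul_one hQ (pow_pos hlam 2)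
  have hU : IsUnit (Vnᵀ * Q) := ((isUnit_transpose _).mpr hVn).mul hQ.isUnit
  have hN : Vnᵀ * Qᵀ * Aᵀ * R⁻¹ * A * Q * Vn + (lam ^ 2) • (Vnᵀ * Q * Vn) =
      Vnᵀ * Q * M * Vn := by
    simp only [M, hQt, Matrix.mul_add, Matrix.add_mul, Matrix.mul_smul, Matrix.smul_mul,
      Matrix.mul_one, Matrix.mul_assoc]
  refine ⟨hN ▸ (hU.mul hM).mul hVn, hM, ?_⟩
  rw [hN, hQt]
  simp only [mulVec_mulVec]
  rw [← mul_inv_mul_mul_mul_cancel hU hVn M]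
  simp only [Matrix.mul_assoc]
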